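/- arXiv:2102.10804 — 2 statements merged into one kernel-verified Lean document; each statement's English description precedes it below -/
import Mathlib

section
/- For every positive integer n, 2n·σ(2n+1) = Σ_{j≥1} (5j(j+1) − 2n)·σ(2n+1 − j(j+1)), where the sum is over all integers j ≥ 1 (only finitely many terms are nonzero since σ vanishes on non-positive arguments). -/
/-!
Put `N = 8n + 5` and weight each solution of `k² + 4de = N` with `d, e ≥ 1` by `(k² - de) d`.
For `k = ±(2j + 1)` the solutions are `(k, d, m / d)` with `d ∣ m = 2n + 1 - j(j + 1)`, and
`k² - m = 5j(j + 1) - 2n`, so the total weight is twice the sum of the terms `j = 0, …, n` of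
the recurrence. The total weight vanishes by Liouville's method: the shears
`(k, d, e) ↦ (k - 2d, d, e + k - d)` (where `e > d - k`) and `(k, d, e) ↦ (k + 2e, d - k - e, e)`
(where `e < d - k`) together permute the solutions and turn `(d + e)(e + k)(d - k)` into
`-(d + e)(e - k)(d + k)`. The sum of these two cubics is `-2(d + e)(k² - de)`, which the symmetry
`d ↔ e` turns into `-4` times the weight. The boundary cases `d = k + e` and `e = d + k` would make
`N` a perfect square, which `8n + 5` is not.
-/

/-- Sum of divisors of an integer, with `sigmaZ m = 0` when `m` is not a positive integer. -/
def sigmaZ (m : ℤ) : ℤ := ∑ d ∈ m.toNat.divisors, (d : ℤ)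

open Finset

theorem Finset.sum_comp_of_involutive {α β : Type*} [AddCommMonoid β] {s t : Finset α}
    {σ : α → α} (hσ : Function.Involutive σ) (hst : ∀ x ∈ s, σ x ∈ t)
    (hts : ∀ x ∈ t, σ x ∈ s) (f : α → β) : ∑ x ∈ s, f (σ x) = ∑ x ∈ t, f x :=
  sum_nbij' σ σ hst hts (fun x _ => hσ x) (fun x _ => hσ x) fun _ _ => rfl

theorem sigmaZ_of_nonpos {m : ℤ} (hm : m ≤ 0) : sigmaZ m = 0 := by
  simp [sigmaZ, Int.toNat_eq_zero.mpr hm]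

theorem not_isSquare_eight_mul_add_five (n : ℤ) : ¬IsSquare (8 * n + 5) := by
  rintro ⟨r, hr⟩
  have h := congrArg (Int.cast : ℤ → ZMod 8) hr
  push_cast at h
  rw [show (8 : ZMod 8) = 0 from rfl, zero_mul, zero_add] at h
  revert h
  generalize (r : ZMod 8) = x
  revert x
  decide

namespace SqAddFourMul

noncomputable def solutions (N : ℤ) : Finset (ℤ × ℤ × ℤ) :=
  (Icc (-N) N ×ˢ Icc 1 N ×ˢ Icc 1 N).filter fun t => t.1 ^ 2 + 4 * t.2.1 * t.2.2 = N

variable {N : ℤ}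

theorem mem_solutions {k d e : ℤ} :
    (k, d, e) ∈ solutions N ↔ 0 < d ∧ 0 < e ∧ k ^ 2 + 4 * d * e = N := by
  simp only [solutions, mem_filter, mem_product, mem_Icc]
  constructor
  · rintro ⟨⟨-, ⟨hd, -⟩, he, -⟩, hq⟩
    exact ⟨hd, he, hq⟩
  · rintro ⟨hd, he, hq⟩
    have hde := mul_pos hd he
    refine ⟨⟨⟨?_, ?_⟩, ⟨hd, ?_⟩, he, ?_⟩, hq⟩ <;>
      nlinarith [sq_nonneg (k + 1), sq_nonneg (k - 1)]

theorem odd_of_mem_solutions (hN : Odd N) {k d e : ℤ} (h : (k, d, e) ∈ solutions N) : Odd k := by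
  obtain ⟨-, -, hq⟩ := mem_solutions.mp h
  have : Odd (k ^ 2) := by
    rw [show k ^ 2 = N - 2 * (2 * d * e) by linear_combination hq]
    exact hN.sub_even (even_two_mul _)
  exact (Int.odd_pow.mp this).resolve_right two_ne_zero

def weight : ℤ × ℤ × ℤ → ℤ
  | (k, d, e) => (k ^ 2 - d * e) * d

def shearF : ℤ × ℤ × ℤ → ℤ
  | (k, d, e) => (d + e) * (e + k) * (d - k)

def shearG : ℤ × ℤ × ℤ → ℤ
  | (k, d, e) => (d + e) * (e - k) * (d + k)

theorem sum_shearF_filter_lt :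
    ∑ t ∈ (solutions N).filter (fun t => t.2.1 - t.1 < t.2.2), shearF t =
      -∑ t ∈ (solutions N).filter (fun t => t.2.1 + t.1 < t.2.2), shearG t := by
  rw [← sum_neg_distrib]
  refine sum_nbij' (fun t => (t.1 - 2 * t.2.1, t.2.1, t.2.2 + t.1 - t.2.1))
    (fun t => (t.1 + 2 * t.2.1, t.2.1, t.2.2 - t.1 - t.2.1)) ?_ ?_ ?_ ?_ ?_
  all_goals rintro ⟨k, d, e⟩ h
  all_goals simp only [mem_filter, mem_solutions] at h ⊢
  · obtain ⟨⟨hd, he, hq⟩, hlt⟩ := h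
    exact ⟨⟨hd, by omega, by linear_combination hq⟩, by omega⟩
  · obtain ⟨⟨hd, he, hq⟩, hlt⟩ := h
    exact ⟨⟨hd, by omega, by linear_combination hq⟩, by omega⟩
  · ext <;> simp only <;> ring
  · ext <;> simp only <;> ring
  · simp only [shearF, shearG]; ring

theorem sum_shearF_filter_not_lt (hN : ¬IsSquare N) :
    ∑ t ∈ (solutions N).filter (fun t => ¬t.2.1 - t.1 < t.2.2), shearF t =
      -∑ t ∈ (solutions N).filter (fun t => ¬t.2.1 + t.1 < t.2.2), shearG t := by
  rw [← sum_neg_distrib]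
  refine sum_nbij' (fun t => (t.1 + 2 * t.2.2, t.2.1 - t.1 - t.2.2, t.2.2))
    (fun t => (t.1 - 2 * t.2.2, t.2.1 + t.1 - t.2.2, t.2.2)) ?_ ?_ ?_ ?_ ?_
  all_goals rintro ⟨k, d, e⟩ h
  all_goals simp only [mem_filter, mem_solutions] at h ⊢
  · obtain ⟨⟨hd, he, hq⟩, hle⟩ := h
    have : d ≠ k + e := fun h => hN ⟨k + 2 * e, by rw [← hq, h]; ring⟩
    exact ⟨⟨by omega, he, by linear_combination hq⟩, by omega⟩
  · obtain ⟨⟨hd, he, hq⟩, hle⟩ := h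
    have : e ≠ d + k := fun h => hN ⟨k + 2 * d, by rw [← hq, h]; ring⟩
    exact ⟨⟨by omega, he, by linear_combination hq⟩, by omega⟩
  · ext <;> simp only <;> ring
  · ext <;> simp only <;> ring
  · simp only [shearF, shearG]; ring

theorem sum_shearF_add_sum_shearG (hN : ¬IsSquare N) :
    ∑ t ∈ solutions N, shearF t + ∑ t ∈ solutions N, shearG t = 0 := by
  rw [← sum_filter_add_sum_filter_not _ (fun t => t.2.1 - t.1 < t.2.2),
    ← sum_filter_add_sum_filter_not _ (fun t => t.2.1 + t.1 < t.2.2) shearG,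
    sum_shearF_filter_lt, sum_shearF_filter_not_lt hN]
  ring

theorem sum_weight_eq_zero (hN : ¬IsSquare N) : ∑ t ∈ solutions N, weight t = 0 := by
  let swap : ℤ × ℤ × ℤ → ℤ × ℤ × ℤ := fun t => (t.1, t.2.2, t.2.1)
  have hswap_mem : ∀ t ∈ solutions N, swap t ∈ solutions N := by
    rintro ⟨k, d, e⟩ h
    obtain ⟨hd, he, hq⟩ := mem_solutions.mp h
    exact mem_solutions.mpr ⟨he, hd, by linear_combination hq⟩
  have hswap : ∑ t ∈ solutions N, weight (swap t) = ∑ t ∈ solutions N, weight t :=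
    sum_comp_of_involutive (fun _ => rfl) hswap_mem hswap_mem weight
  have hshear : ∀ t, shearF t + shearG t = -2 * (weight t + weight (swap t)) := by
    rintro ⟨k, d, e⟩
    simp only [shearF, shearG, weight, swap]
    ring
  have h := sum_shearF_add_sum_shearG hN
  rw [← sum_add_distrib, sum_congr rfl fun t _ => hshear t, ← mul_sum, sum_add_distrib,
    hswap] at h
  linarith

theorem sum_weight_eq_two_mul_sum_filter_pos (hN : Odd N) :
    ∑ t ∈ solutions N, weight t = 2 * ∑ t ∈ (solutions N).filter (0 < ·.1), weight t := by
  let neg : ℤ × ℤ × ℤ → ℤ × ℤ × ℤ := fun t => (-t.1, t.2.1, t.2.2)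
  have hneg : ∑ t ∈ (solutions N).filter (¬0 < ·.1), weight (neg t) =
      ∑ t ∈ (solutions N).filter (0 < ·.1), weight t := by
    refine sum_comp_of_involutive (fun t => by simp [neg]) ?_ ?_ weight
    all_goals rintro ⟨k, d, e⟩ h
    all_goals simp only [mem_filter, mem_solutions, neg] at h ⊢
    · have hk := odd_of_mem_solutions hN (mem_solutions.mpr h.1)
      obtain ⟨⟨hd, he, hq⟩, hle⟩ := h
      exact ⟨⟨hd, he, by linear_combination hq⟩, by rcases hk with ⟨a, rfl⟩; omega⟩
    · obtain ⟨⟨hd, he, hq⟩, hlt⟩ := h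
      exact ⟨⟨hd, he, by linear_combination hq⟩, by omega⟩
  have hweight : ∀ t, weight (neg t) = weight t := by
    rintro ⟨k, d, e⟩
    simp only [weight, neg, neg_sq]
  simp only [hweight] at hneg
  rw [← sum_filter_add_sum_filter_not _ (0 < ·.1), hneg]
  ring

theorem sum_weight_filter_fst_eq {k m : ℤ} (hm : k ^ 2 + 4 * m = N) :
    ∑ t ∈ (solutions N).filter (·.1 = k), weight t = (k ^ 2 - m) * sigmaZ m := by
  rw [sigmaZ, mul_sum, ← Nat.sum_divisorsAntidiagonal (fun a _ => (k ^ 2 - m) * (a : ℤ))]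
  refine sum_nbij' (fun t => (t.2.1.toNat, t.2.2.toNat)) (fun p => (k, p.1, p.2)) ?_ ?_ ?_ ?_ ?_
  · rintro ⟨k', d, e⟩ h
    simp only [mem_filter, mem_solutions] at h
    obtain ⟨⟨hd, he, hq⟩, rfl⟩ := h
    lift d to ℕ using hd.le
    lift e to ℕ using he.le
    obtain rfl : m = d * e := by linarith
    rw [← Nat.cast_mul, Int.toNat_natCast, Nat.mem_divisorsAntidiagonal]
    exact ⟨rfl, mul_ne_zero (by omega) (by omega)⟩
  · rintro ⟨a, b⟩ h
    obtain ⟨hab, hne⟩ := Nat.mem_divisorsAntidiagonal.mp h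
    have hm' : (a : ℤ) * b = m := by
      rw [← Int.toNat_of_nonneg (a := m) (by omega), ← hab]
      push_cast
      rfl
    obtain ⟨ha, hb⟩ := mul_ne_zero_iff.mp (hab ▸ hne)
    simp only [mem_filter, mem_solutions, and_true]
    exact ⟨by omega, by omega, by linear_combination hm + 4 * hm'⟩
  · rintro ⟨k', d, e⟩ h
    simp only [mem_filter, mem_solutions] at h
    obtain ⟨⟨hd, he, -⟩, rfl⟩ := h
    simp only [Int.toNat_of_nonneg hd.le, Int.toNat_of_nonneg he.le]
  · rintro ⟨a, b⟩ -
    simp only [Int.toNat_natCast]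
  · rintro ⟨k', d, e⟩ h
    simp only [mem_filter, mem_solutions] at h
    obtain ⟨⟨hd, he, hq⟩, rfl⟩ := h
    rw [weight, Int.toNat_of_nonneg hd.le]
    obtain rfl : m = d * e := by linarith
    ring

end SqAddFourMul

open SqAddFourMul

theorem sum_range_recurrence_term_eq_zero (n : ℕ) :
    ∑ j ∈ range (n + 1), (5 * (j : ℤ) * ((j : ℤ) + 1) - 2 * (n : ℤ)) *
      sigmaZ (2 * (n : ℤ) + 1 - (j : ℤ) * ((j : ℤ) + 1)) = 0 := by
  set N : ℤ := 8 * n + 5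
  have hN : Odd N := ⟨4 * n + 2, by ring⟩
  have hpos : ∑ t ∈ (solutions N).filter (0 < ·.1), weight t = 0 := by
    have h := sum_weight_eq_two_mul_sum_filter_pos hN
    rw [sum_weight_eq_zero (not_isSquare_eight_mul_add_five n)] at h
    linarith
  have hmaps : ∀ t ∈ (solutions N).filter (0 < ·.1), (t.1 / 2).toNat ∈ range (n + 1) := by
    rintro ⟨k, d, e⟩ h
    obtain ⟨⟨hd, he, hq⟩, hk⟩ := by simpa only [mem_filter, mem_solutions] using h
    have : k ≤ 2 * n + 1 := by nlinarith [mul_pos hd he]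
    rw [mem_range]
    omega
  rw [← hpos, ← sum_fiberwise_of_maps_to hmaps]
  refine sum_congr rfl fun j _ => ?_
  have hfiber : ((solutions N).filter (0 < ·.1)).filter (fun t => (t.1 / 2).toNat = j) =
      (solutions N).filter (·.1 = 2 * (j : ℤ) + 1) := by
    rw [filter_filter]
    refine filter_congr fun ⟨k, d, e⟩ h => ?_
    obtain ⟨a, rfl⟩ := odd_of_mem_solutions hN h
    omega
  rw [hfiber, sum_weight_filter_fst_eq (m := 2 * (n : ℤ) + 1 - (j : ℤ) * ((j : ℤ) + 1)) (by ring)]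
  ring

theorem sigma_recurrence_one_general (n : ℕ) :
    2 * (n : ℤ) * sigmaZ (2 * (n : ℤ) + 1) =
      ∑ᶠ j ∈ Set.Ici (1 : ℕ),
        (5 * (j : ℤ) * ((j : ℤ) + 1) - 2 * (n : ℤ)) *
          sigmaZ (2 * (n : ℤ) + 1 - (j : ℤ) * ((j : ℤ) + 1)) := by
  have hsum := sum_range_recurrence_term_eq_zero n
  rw [range_eq_Ico, sum_eq_sum_Ico_succ_bot n.succ_pos] at hsum
  rw [finsum_mem_eq_sum_of_inter_support_eq _ (t := Ico 1 (n + 1)) ?_]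
  · simp only [CharP.cast_eq_zero, mul_zero, zero_mul, zero_sub, sub_zero] at hsum
    linarith
  · ext j
    simp only [Set.mem_inter_iff, Set.mem_Ici, coe_Ico, Set.mem_Ico, Function.mem_support]
    refine ⟨fun ⟨h1, h⟩ => ⟨⟨h1, ?_⟩, h⟩, fun ⟨⟨h1, _⟩, h⟩ => ⟨h1, h⟩⟩
    by_contra hj
    refine h ?_
    rw [sigmaZ_of_nonpos (by nlinarith), mul_zero]

theorem sigma_recurrence_one (n : ℕ) (hn : 0 < n) :
    2 * (n : ℤ) * sigmaZ (2 * (n : ℤ) + 1) =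
      ∑ᶠ j ∈ Set.Ici (1 : ℕ),
        (5 * (j : ℤ) * ((j : ℤ) + 1) - 2 * (n : ℤ)) *
          sigmaZ (2 * (n : ℤ) + 1 - (j : ℤ) * ((j : ℤ) + 1)) :=
  sigma_recurrence_one_general n
end

section
/- For every positive integer n, n·σ(2n+1) = 4·Σ_{j≥1} (σ(j) − 4σ(j/2))·σ(2n+1 − 2j), where the sum is over all integers j ≥ 1 (only finitely many terms are nonzero), and σ(j/2) is taken to be 0 when j is odd. -/
/-- `sigmaHalf m = sigmaZ (m / 2)` when `m` is even, and `0` when `m` is odd. -/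
def sigmaHalf (m : ℤ) : ℤ := if 2 ∣ m then sigmaZ (m / 2) else 0

/-!
Liouville's elementary method. Sum a weight `W` over the quadruples `(a, b, x, y)` of positive
integers with `a x + b y = N`. The substitution `(a, b, x, y) ↦ (a - b, b, x, x + y)` maps the
part `a > b` bijectively onto the part `x < y`; together with the swap
`(a, b, x, y) ↦ (b, a, y, x)` and a functional equation linking `W` to a second weight `F`, it
reduces the sum of `W` to the sums of `F` over the diagonals `x = y` and `a = b`, both of which
run over the factorisations `N = d e`. For `W = (4 [2 ∣ a] - 16 [4 ∣ a]) x y` the sum of `W` is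
`4 ∑ σ(j) σ(N - 2j) - 16 ∑ σ(m) σ(N - 4m)`, and for odd `N = 2n + 1` the diagonal sums add up
to `n σ(N)`.
-/

open Finset ArithmeticFunction
open scoped ArithmeticFunction.sigma

def quadruples (N : ℕ) : Finset ((ℕ × ℕ) × ℕ × ℕ) :=
  {p ∈ (Icc 1 N ×ˢ Icc 1 N) ×ˢ Icc 1 N ×ˢ Icc 1 N | p.1.1 * p.2.1 + p.1.2 * p.2.2 = N}

theorem mem_quadruples {N a b x y : ℕ} :
    ((a, b), x, y) ∈ quadruples N ↔ 0 < a ∧ 0 < b ∧ 0 < x ∧ 0 < y ∧ a * x + b * y = N := by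
  simp only [quadruples, mem_filter, mem_product, mem_Icc]
  constructor
  · rintro ⟨⟨⟨⟨ha, -⟩, hb, -⟩, ⟨hx, -⟩, hy, -⟩, he⟩
    exact ⟨ha, hb, hx, hy, he⟩
  · rintro ⟨ha, hb, hx, hy, rfl⟩
    have := Nat.le_mul_of_pos_right a hx
    have := Nat.le_mul_of_pos_right b hy
    have := Nat.le_mul_of_pos_left x ha
    have := Nat.le_mul_of_pos_left y hb
    refine ⟨⟨⟨⟨ha, ?_⟩, hb, ?_⟩, ⟨hx, ?_⟩, hy, ?_⟩, rfl⟩ <;> omega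

theorem swap_mem_quadruples {N : ℕ} {p : (ℕ × ℕ) × ℕ × ℕ} :
    p.swap ∈ quadruples N ↔ p ∈ quadruples N := by
  obtain ⟨⟨a, b⟩, x, y⟩ := p
  simp only [Prod.swap_prod_mk, mem_quadruples, mul_comm x, mul_comm y]
  tauto

theorem map_swap_swap_mem_quadruples {N : ℕ} {p : (ℕ × ℕ) × ℕ × ℕ} :
    Prod.map Prod.swap Prod.swap p ∈ quadruples N ↔ p ∈ quadruples N := by
  obtain ⟨⟨a, b⟩, x, y⟩ := p
  simp only [Prod.map_apply, Prod.swap_prod_mk, mem_quadruples, add_comm (b * y)]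
  tauto

theorem Finset.sum_eq_sum_filter_lt_add_sum_filter_eq {α β M : Type*} [LinearOrder β]
    [AddCommMonoid M] {s : Finset α} {J : α → α} (hJ : Function.Involutive J)
    (hJs : ∀ p ∈ s, J p ∈ s) {u v : α → β} (huv : ∀ p, u (J p) = v p) (φ : α → M) :
    ∑ p ∈ s, φ p = ∑ p ∈ s with v p < u p, (φ p + φ (J p)) + ∑ p ∈ s with u p = v p, φ p := by
  have hvu : ∀ p, v (J p) = u p := fun p => by rw [← huv, hJ]
  have hreflect : ∑ p ∈ s with v p < u p, φ (J p) = ∑ p ∈ s with u p < v p, φ p := by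
    refine sum_nbij' J J ?_ ?_ (fun p _ => hJ p) (fun p _ => hJ p) (fun _ _ => rfl) <;>
      simp only [mem_filter, huv, hvu] <;> exact fun p hp => ⟨hJs p hp.1, hp.2⟩
  rw [sum_add_distrib, hreflect, sum_filter, sum_filter, sum_filter, ← sum_add_distrib,
    ← sum_add_distrib]
  refine sum_congr rfl fun p _ => ?_
  rcases lt_trichotomy (u p) (v p) with h | h | h
  · simp [h, h.ne, h.not_gt]
  · simp [h]
  · simp [h, h.ne', h.not_gt]

def liouvilleMap (p : (ℕ × ℕ) × ℕ × ℕ) : (ℕ × ℕ) × ℕ × ℕ :=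
  ((p.1.1 - p.1.2, p.1.2), p.2.1, p.2.1 + p.2.2)

theorem sum_quadruples_filter_lt_eq_sum_liouvilleMap {M : Type*} [AddCommMonoid M] (N : ℕ)
    (φ : (ℕ × ℕ) × ℕ × ℕ → M) :
    ∑ p ∈ quadruples N with p.2.1 < p.2.2, φ p =
      ∑ p ∈ quadruples N with p.1.2 < p.1.1, φ (liouvilleMap p) := by
  symm
  refine sum_nbij' liouvilleMap (fun p => ((p.1.1 + p.1.2, p.1.2), p.2.1, p.2.2 - p.2.1))
    ?_ ?_ ?_ ?_ (fun _ _ => rfl)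
  · rintro ⟨⟨a, b⟩, x, y⟩ hp
    simp only [mem_filter, mem_quadruples, liouvilleMap] at hp ⊢
    obtain ⟨⟨ha, hb, hx, hy, rfl⟩, hba⟩ := hp
    refine ⟨⟨by omega, hb, hx, by omega, ?_⟩, by omega⟩
    zify [hba.le]
    ring
  · rintro ⟨⟨a, b⟩, x, y⟩ hp
    simp only [mem_filter, mem_quadruples] at hp ⊢
    obtain ⟨⟨ha, hb, hx, hy, rfl⟩, hxy⟩ := hp
    refine ⟨⟨by omega, hb, hx, by omega, ?_⟩, by omega⟩
    zify [hxy.le]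
    ring
  all_goals
    rintro ⟨⟨a, b⟩, x, y⟩ hp
    obtain ⟨-, hlt⟩ := mem_filter.1 hp
    dsimp only at hlt
    simp only [liouvilleMap, Prod.mk.injEq, true_and, and_true]
    omega

theorem sum_quadruples_of_functional_equation (N : ℕ) (F W : (ℕ × ℕ) × ℕ × ℕ → ℤ)
    (hFW : ∀ b c x y, F ((c, b), x, x + y) + F ((b, c), x + y, x) + W ((b + c, b), x, y) +
      W ((b, b + c), y, x) = F ((b + c, b), x, y) + F ((b, b + c), y, x)) :
    ∑ p ∈ quadruples N, W p =
      ∑ p ∈ quadruples N with p.2.2 = p.2.1, F p - ∑ p ∈ quadruples N with p.1.1 = p.1.2, F p +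
        ∑ p ∈ quadruples N with p.1.1 = p.1.2, W p := by
  set J : (ℕ × ℕ) × ℕ × ℕ → (ℕ × ℕ) × ℕ × ℕ := Prod.map Prod.swap Prod.swap
  have hJ : Function.Involutive J := fun _ => rfl
  have hJs : ∀ p ∈ quadruples N, J p ∈ quadruples N := fun p => map_swap_swap_mem_quadruples.2
  have split_ab (φ : (ℕ × ℕ) × ℕ × ℕ → ℤ) : ∑ p ∈ quadruples N, φ p =
      ∑ p ∈ quadruples N with p.1.2 < p.1.1, (φ p + φ (J p)) +
        ∑ p ∈ quadruples N with p.1.1 = p.1.2, φ p :=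
    sum_eq_sum_filter_lt_add_sum_filter_eq hJ hJs (u := fun p => p.1.1) (v := fun p => p.1.2)
      (fun _ => rfl) φ
  have split_xy : ∑ p ∈ quadruples N, F p =
      ∑ p ∈ quadruples N with p.2.1 < p.2.2, (F p + F (J p)) +
        ∑ p ∈ quadruples N with p.2.2 = p.2.1, F p :=
    sum_eq_sum_filter_lt_add_sum_filter_eq hJ hJs (u := fun p => p.2.2) (v := fun p => p.2.1)
      (fun _ => rfl) F
  have hT : ∑ p ∈ quadruples N with p.2.1 < p.2.2, (F p + F (J p)) =
      ∑ p ∈ quadruples N with p.1.2 < p.1.1, ((F p + F (J p)) - (W p + W (J p))) := by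
    rw [sum_quadruples_filter_lt_eq_sum_liouvilleMap]
    refine sum_congr rfl fun p hp => ?_
    obtain ⟨⟨a, b⟩, x, y⟩ := p
    obtain ⟨c, rfl⟩ : ∃ c, a = b + c := ⟨a - b, by simp only [mem_filter] at hp; omega⟩
    have := hFW b c x y
    simp only [liouvilleMap, J, Prod.map_apply, Prod.swap_prod_mk, Nat.add_sub_cancel_left]
    linarith
  rw [sum_sub_distrib] at hT
  linarith [split_ab F, split_ab W]

/- `F = A x² + B x y` and `W = C x y`, with coefficients depending on `a, b mod 4`. The tables
solve the linear system `coeff_relations` (the functional equation, coefficient by coefficient)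
with `C a = 4 [2 ∣ a] - 16 [4 ∣ a]`. -/
def coeffA : ZMod 4 → ZMod 4 → ℤ :=
  ![![12, 6, 4, 6], ![1, 1, 1, 1], ![0, -2, 0, -2], ![1, 1, 1, 1]]

def coeffB : ZMod 4 → ZMod 4 → ℤ :=
  ![![-6, -6, -4, -6], ![0, -2, 2, 4], ![0, 0, 2, 2], ![0, 0, 0, -2]]

def coeffC : ZMod 4 → ℤ := ![-12, 0, 4, 0]

def liouvilleF (p : (ℕ × ℕ) × ℕ × ℕ) : ℤ :=
  coeffA p.1.1 p.1.2 * (p.2.1 : ℤ) ^ 2 + coeffB p.1.1 p.1.2 * ((p.2.1 : ℤ) * p.2.2)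

def liouvilleW (p : (ℕ × ℕ) × ℕ × ℕ) : ℤ :=
  coeffC p.1.1 * ((p.2.1 : ℤ) * p.2.2)

theorem coeff_relations (r s : ZMod 4) :
    coeffA s r + coeffB s r + coeffA r s + coeffB r s = coeffA (r + s) r ∧
    coeffB s r + 2 * coeffA r s + coeffB r s + coeffC (r + s) + coeffC r =
      coeffB (r + s) r + coeffB r (r + s) ∧
    coeffA r s = coeffA r (r + s) := by
  revert r s
  decide

theorem liouvilleF_functional_equation (b c x y : ℕ) :
    liouvilleF ((c, b), x, x + y) + liouvilleF ((b, c), x + y, x) +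
        liouvilleW ((b + c, b), x, y) + liouvilleW ((b, b + c), y, x) =
      liouvilleF ((b + c, b), x, y) + liouvilleF ((b, b + c), y, x) := by
  obtain ⟨hx2, hxy, hy2⟩ := coeff_relations b c
  simp only [liouvilleF, liouvilleW, Nat.cast_add]
  linear_combination (x : ℤ) ^ 2 * hx2 + (x : ℤ) * y * hxy + (y : ℤ) ^ 2 * hy2

theorem natCast_zmod_four_of_odd {e : ℕ} (he : Odd e) : (e : ZMod 4) = 1 ∨ (e : ZMod 4) = 3 := by
  have := Nat.odd_iff.1 he
  obtain h | h : e % 4 = 1 ∨ e % 4 = 3 := by omega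
  all_goals simp [← ZMod.natCast_mod e, h]

theorem coeffC_natCast (a : ℕ) :
    coeffC a = 4 * (if 2 ∣ a then 1 else 0) - 16 * (if 4 ∣ a then 1 else 0) := by
  rw [← ZMod.natCast_mod]
  obtain h | h | h | h : a % 4 = 0 ∨ a % 4 = 1 ∨ a % 4 = 2 ∨ a % 4 = 3 := by omega
  all_goals
    have h2 : 2 ∣ a ↔ a % 4 = 0 ∨ a % 4 = 2 := by omega
    have h4 : 4 ∣ a ↔ a % 4 = 0 := by omega
    simp [h, h2, h4, coeffC]

theorem sum_quadruples_filter_snd_eq {M : Type*} [AddCommMonoid M] (N : ℕ)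
    (f : (ℕ × ℕ) × ℕ × ℕ → M) :
    ∑ p ∈ quadruples N with p.2.2 = p.2.1, f p =
      ∑ de ∈ N.divisorsAntidiagonal, ∑ t ∈ Ico 1 de.2, f ((t, de.2 - t), de.1, de.1) := by
  rw [sum_sigma']
  refine sum_nbij' (fun p => ⟨(p.2.1, p.1.1 + p.1.2), p.1.1⟩)
    (fun q => ((q.2, q.1.2 - q.2), q.1.1, q.1.1)) ?_ ?_ ?_ ?_ ?_
  · rintro ⟨⟨a, b⟩, x, y⟩ hp
    simp only [mem_filter, mem_quadruples] at hp
    obtain ⟨⟨ha, hb, hx, -, rfl⟩, rfl⟩ := hp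
    simp only [mem_sigma, Nat.mem_divisorsAntidiagonal, mem_Ico]
    refine ⟨⟨by ring, by positivity⟩, ha, by omega⟩
  · rintro ⟨⟨d, e⟩, t⟩ hq
    simp only [mem_sigma, Nat.mem_divisorsAntidiagonal, mem_Ico] at hq
    obtain ⟨⟨rfl, hN⟩, ht, hte⟩ := hq
    simp only [mem_filter, mem_quadruples, and_true]
    have hd := Nat.pos_of_ne_zero (left_ne_zero_of_mul hN)
    refine ⟨ht, by omega, hd, hd, ?_⟩
    rw [← add_mul, Nat.add_sub_cancel' hte.le, mul_comm]
  · rintro ⟨⟨a, b⟩, x, y⟩ hp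
    simp only [mem_filter] at hp
    obtain ⟨-, rfl⟩ := hp
    simp
  · rintro ⟨⟨d, e⟩, t⟩ hq
    simp only [mem_sigma, mem_Ico] at hq
    simp only [Sigma.mk.injEq, Prod.mk.injEq, heq_eq_eq, true_and, and_true]
    omega
  · rintro ⟨⟨a, b⟩, x, y⟩ hp
    simp only [mem_filter] at hp
    obtain ⟨-, rfl⟩ := hp
    simp

theorem sum_quadruples_filter_fst_eq {M : Type*} [AddCommMonoid M] (N : ℕ)
    (f : (ℕ × ℕ) × ℕ × ℕ → M) :
    ∑ p ∈ quadruples N with p.1.1 = p.1.2, f p =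
      ∑ de ∈ N.divisorsAntidiagonal, ∑ t ∈ Ico 1 de.2, f ((de.1, de.1), t, de.2 - t) := by
  refine Eq.trans ?_ (sum_quadruples_filter_snd_eq N fun p => f p.swap)
  refine sum_nbij' Prod.swap Prod.swap ?_ ?_ (fun _ _ => rfl) (fun _ _ => rfl) (fun _ _ => rfl) <;>
    simp only [mem_filter, swap_mem_quadruples, Prod.fst_swap, Prod.snd_swap] <;>
    exact fun p hp => ⟨hp.1, hp.2.symm⟩

theorem coeff_pair_of_odd (r s : ZMod 4) (hrs : r + s = 1 ∨ r + s = 3) :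
    coeffA r s + coeffB r s + (coeffA s r + coeffB s r) = 1 := by
  revert r s
  decide

theorem coeff_diag_of_odd (r : ZMod 4) (hr : r = 1 ∨ r = 3) :
    coeffA r r = 1 ∧ coeffB r r = -2 ∧ coeffC r = 0 := by
  revert r
  decide

theorem two_mul_sum_liouvilleF_diag_snd {e : ℕ} (he : Odd e) (d : ℕ) :
    2 * ∑ t ∈ Ico 1 e, liouvilleF ((t, e - t), d, d) = (d : ℤ) ^ 2 * (e - 1) := by
  have hpair : ∀ t ∈ Ico 1 e,
      liouvilleF ((t, e - t), d, d) + liouvilleF ((e - t, e - (e - t)), d, d) = (d : ℤ) ^ 2 := by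
    intro t ht
    have hte : e - (e - t) = t := by simp only [mem_Ico] at ht; omega
    have hsum : (t : ZMod 4) + ((e - t : ℕ) : ZMod 4) = e := by
      rw [← Nat.cast_add, Nat.add_sub_cancel' (mem_Ico.1 ht).2.le]
    have := coeff_pair_of_odd _ _ (hsum ▸ natCast_zmod_four_of_odd he)
    rw [hte, liouvilleF, liouvilleF]
    linear_combination (d : ℤ) ^ 2 * this
  have hreflect := sum_Ico_reflect (fun t => liouvilleF ((t, e - t), d, d)) 1 (Nat.le_succ e)
  simp only [Nat.add_sub_cancel_left, Nat.add_sub_cancel] at hreflect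
  rw [two_mul]
  nth_rw 2 [← hreflect]
  rw [← sum_add_distrib, sum_congr rfl hpair, sum_const, Nat.card_Ico,
    nsmul_eq_mul, Nat.cast_sub he.pos]
  push_cast
  ring

theorem two_mul_sum_range_three_sq_sub (e : ℕ) (m : ℤ) :
    2 * ∑ t ∈ range e, (3 * (t : ℤ) ^ 2 - 2 * m * t) =
      e * (e - 1) * (2 * e - 1) - 2 * m * e * (e - 1) := by
  induction e with
  | zero => simp
  | succ e ih =>
    rw [sum_range_succ, mul_add, ih]
    push_cast
    ring

theorem two_mul_sum_liouvilleF_diag_fst {d : ℕ} (hd : Odd d) (e : ℕ) :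
    2 * ∑ t ∈ Ico 1 e, liouvilleF ((d, d), t, e - t) = -(e * (e - 1)) := by
  obtain ⟨hA, hB, -⟩ := coeff_diag_of_odd _ (natCast_zmod_four_of_odd hd)
  have hterm : ∀ t ∈ range e, liouvilleF ((d, d), t, e - t) = 3 * (t : ℤ) ^ 2 - 2 * e * t := by
    intro t ht
    rw [liouvilleF, hA, hB, Nat.cast_sub (mem_range.1 ht).le]
    ring
  have hzero : ∑ t ∈ Ico 1 e, liouvilleF ((d, d), t, e - t) =
      ∑ t ∈ range e, liouvilleF ((d, d), t, e - t) := by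
    refine sum_subset (fun t ht => by simp only [mem_Ico, mem_range] at ht ⊢; omega) ?_
    intro t ht ht'
    obtain rfl : t = 0 := by simp only [mem_Ico, mem_range] at ht ht'; omega
    simp [liouvilleF]
  rw [hzero, sum_congr rfl hterm, two_mul_sum_range_three_sq_sub]
  ring

theorem liouvilleW_diag_of_odd {d : ℕ} (hd : Odd d) (x y : ℕ) : liouvilleW ((d, d), x, y) = 0 := by
  simp [liouvilleW, (coeff_diag_of_odd _ (natCast_zmod_four_of_odd hd)).2.2]

theorem sum_divisorsAntidiagonal_swap {M : Type*} [AddCommMonoid M] (N : ℕ) (f : ℕ × ℕ → M) :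
    ∑ de ∈ N.divisorsAntidiagonal, f de.swap = ∑ de ∈ N.divisorsAntidiagonal, f de := by
  conv_rhs => rw [← Nat.map_swap_divisorsAntidiagonal, sum_map]
  rfl

theorem two_mul_sum_quadruples_liouvilleW {N : ℕ} (hN : Odd N) :
    2 * ∑ p ∈ quadruples N, liouvilleW p = ((N : ℤ) - 1) * σ 1 N := by
  have hodd : ∀ de ∈ N.divisorsAntidiagonal, Odd de.1 ∧ Odd de.2 := fun de hde => by
    rw [← (Nat.mem_divisorsAntidiagonal.1 hde).1] at hN
    exact ⟨Nat.Odd.of_mul_left hN, Nat.Odd.of_mul_right hN⟩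
  rw [sum_quadruples_of_functional_equation N _ _ liouvilleF_functional_equation,
    sum_quadruples_filter_snd_eq, sum_quadruples_filter_fst_eq, sum_quadruples_filter_fst_eq,
    sum_eq_zero fun de hde => sum_eq_zero fun _ _ => liouvilleW_diag_of_odd (hodd de hde).1 _ _,
    add_zero, mul_sub, mul_sum, mul_sum,
    sum_congr rfl fun de hde => two_mul_sum_liouvilleF_diag_snd (hodd de hde).2 de.1,
    sum_congr rfl fun de hde => two_mul_sum_liouvilleF_diag_fst (hodd de hde).1 de.2,
    ← sum_divisorsAntidiagonal_swap, ← sum_sub_distrib, sigma_one_apply, Nat.cast_sum,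
    ← Nat.sum_divisorsAntidiagonal' (fun _ e => (e : ℤ)), mul_sum]
  refine sum_congr rfl fun de hde => ?_
  have hN : ((de.1 * de.2 : ℕ) : ℤ) = N := congrArg _ (Nat.mem_divisorsAntidiagonal.1 hde).1
  push_cast at hN
  simp only [Prod.fst_swap, Prod.snd_swap]
  linear_combination (de.2 : ℤ) * hN

theorem sum_quadruples_liouvilleW (N : ℕ) :
    ∑ p ∈ quadruples N, liouvilleW p =
      4 * ((∑ p ∈ quadruples N with 2 ∣ p.1.1, p.2.1 * p.2.2 : ℕ) : ℤ) -
        16 * ((∑ p ∈ quadruples N with 4 ∣ p.1.1, p.2.1 * p.2.2 : ℕ) : ℤ) := by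
  rw [sum_filter, sum_filter, Nat.cast_sum, Nat.cast_sum, mul_sum, mul_sum, ← sum_sub_distrib]
  refine sum_congr rfl fun p _ => ?_
  rw [liouvilleW, coeffC_natCast]
  split_ifs <;> push_cast <;> ring

theorem sum_quadruples_filter_dvd_mul {N k M : ℕ} (hk : 0 < k) (hM : N ≤ k * M) :
    ∑ p ∈ quadruples N with k ∣ p.1.1, p.2.1 * p.2.2 = ∑ m ∈ range M, σ 1 m * σ 1 (N - k * m) := by
  have hσ (m : ℕ) : σ 1 m = ∑ u ∈ m.divisorsAntidiagonal, u.2 := by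
    rw [sigma_one_apply, Nat.sum_divisorsAntidiagonal' (fun _ e => e)]
  simp only [hσ, sum_mul_sum, ← sum_product', sum_sigma']
  refine sum_nbij' (fun p => ⟨p.1.1 / k * p.2.1, (p.1.1 / k, p.2.1), p.1.2, p.2.2⟩)
    (fun q => ((k * q.2.1.1, q.2.2.1), q.2.1.2, q.2.2.2)) ?_ ?_ ?_ ?_ (fun _ _ => rfl)
  · rintro ⟨⟨a, b⟩, x, y⟩ hp
    simp only [mem_filter, mem_quadruples] at hp
    obtain ⟨⟨ha, hb, hx, hy, rfl⟩, a, rfl⟩ := hp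
    have hax : 0 < a * x := Nat.mul_pos (Nat.pos_of_mul_pos_left ha) hx
    simp only [mem_sigma, mem_range, mem_product, Nat.mem_divisorsAntidiagonal,
      Nat.mul_div_cancel_left _ hk, mul_assoc, Nat.add_sub_cancel_left, true_and]
    refine ⟨?_, hax.ne', (Nat.mul_pos hb hy).ne'⟩
    rw [mul_assoc] at hM
    exact Nat.lt_of_mul_lt_mul_left ((Nat.lt_add_of_pos_right (Nat.mul_pos hb hy)).trans_le hM)
  · rintro ⟨m, ⟨a, x⟩, b, y⟩ hq
    simp only [mem_sigma, mem_range, mem_product, Nat.mem_divisorsAntidiagonal] at hq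
    obtain ⟨-, ⟨rfl, hax⟩, hby, hrest⟩ := hq
    simp only [mem_filter, mem_quadruples, dvd_mul_right, and_true]
    obtain ⟨ha, hx⟩ := Nat.mul_ne_zero_iff.1 hax
    obtain ⟨hb, hy⟩ := Nat.mul_ne_zero_iff.1 (hby ▸ hrest)
    refine ⟨Nat.mul_pos hk (Nat.pos_of_ne_zero ha), Nat.pos_of_ne_zero hb,
      Nat.pos_of_ne_zero hx, Nat.pos_of_ne_zero hy, ?_⟩
    rw [hby, mul_assoc]
    omega
  · rintro ⟨⟨a, b⟩, x, y⟩ hp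
    simp only [mem_filter] at hp
    simp [Nat.mul_div_cancel' hp.2]
  · rintro ⟨m, ⟨a, x⟩, b, y⟩ hq
    simp only [mem_sigma, mem_product, Nat.mem_divisorsAntidiagonal] at hq
    obtain ⟨-, ⟨rfl, -⟩, -⟩ := hq
    simp [Nat.mul_div_cancel_left _ hk]

theorem sigmaZ_natCast (m : ℕ) : sigmaZ m = σ 1 m := by
  rw [sigmaZ, Int.toNat_natCast, sigma_one_apply, Nat.cast_sum]

-- Truncated subtraction is harmless: both sides vanish when `a ≤ b`.
theorem sigmaZ_natCast_sub (a b : ℕ) : sigmaZ ((a : ℤ) - b) = σ 1 (a - b) := by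
  rw [sigmaZ, Int.toNat_sub, sigma_one_apply, Nat.cast_sum]

theorem sigmaHalf_natCast (m : ℕ) : sigmaHalf m = if 2 ∣ m then (σ 1 (m / 2) : ℤ) else 0 := by
  rw [sigmaHalf, ← sigmaZ_natCast]
  norm_cast

theorem finsum_mem_Ici_one_eq_sum_range {M : Type*} [AddCommMonoid M] {f : ℕ → M} {m : ℕ}
    (h0 : f 0 = 0) (hm : ∀ j, m ≤ j → f j = 0) : ∑ᶠ j ∈ Set.Ici 1, f j = ∑ j ∈ range m, f j := by
  apply finsum_mem_eq_sum_of_inter_support_eq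
  ext j
  simp only [Set.mem_inter_iff, Set.mem_Ici, Function.mem_support, coe_range, Set.mem_Iio]
  constructor
  · rintro ⟨-, hj⟩
    exact ⟨by_contra fun h => hj (hm j (not_lt.1 h)), hj⟩
  · rintro ⟨-, hj⟩
    exact ⟨Nat.one_le_iff_ne_zero.2 (by rintro rfl; exact hj h0), hj⟩

theorem sum_range_two_mul_ite_two_dvd {M : Type*} [AddCommMonoid M] (f : ℕ → M) (m : ℕ) :
    ∑ j ∈ range (2 * m), (if 2 ∣ j then f j else 0) = ∑ i ∈ range m, f (2 * i) := by
  induction m with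
  | zero => simp
  | succ m ih =>
    rw [mul_add_one, sum_range_succ, sum_range_succ, ih, sum_range_succ]
    simp [Nat.not_two_dvd_bit1]

theorem sigma_recurrence_three_general (n : ℕ) :
    (n : ℤ) * sigmaZ (2 * (n : ℤ) + 1) =
      4 * ∑ᶠ j ∈ Set.Ici (1 : ℕ),
        (sigmaZ (j : ℤ) - 4 * sigmaHalf (j : ℤ)) *
          sigmaZ (2 * (n : ℤ) + 1 - 2 * (j : ℤ)) := by
  have hW := two_mul_sum_quadruples_liouvilleW (odd_two_mul_add_one n)
  rw [sum_quadruples_liouvilleW,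
    sum_quadruples_filter_dvd_mul two_pos (M := 2 * (n + 1)) (by omega),
    sum_quadruples_filter_dvd_mul four_pos (M := n + 1) (by omega)] at hW
  have hterm (j : ℕ) : (sigmaZ j - 4 * sigmaHalf j) * sigmaZ (2 * (n : ℤ) + 1 - 2 * j) =
      σ 1 j * σ 1 (2 * n + 1 - 2 * j) -
        4 * if 2 ∣ j then (σ 1 (j / 2) * σ 1 (2 * n + 1 - 2 * j) : ℤ) else 0 := by
    rw [sigmaZ_natCast, sigmaHalf_natCast, ← sigmaZ_natCast_sub]
    split_ifs <;> push_cast <;> ring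
  rw [finsum_mem_congr rfl fun j _ => hterm j, finsum_mem_Ici_one_eq_sum_range (m := 2 * (n + 1))
      (by simp) fun j hj => by simp [show 2 * n + 1 - 2 * j = 0 by omega],
    sum_sub_distrib, ← mul_sum, sum_range_two_mul_ite_two_dvd,
    show 2 * (n : ℤ) + 1 = (2 * n + 1 : ℕ) by push_cast; ring, sigmaZ_natCast]
  simp only [Nat.mul_div_cancel_left _ two_pos, ← mul_assoc] at hW ⊢
  push_cast at hW ⊢
  linarith

theorem sigma_recurrence_three (n : ℕ) (hn : 0 < n) :
    (n : ℤ) * sigmaZ (2 * (n : ℤ) + 1) =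
      4 * ∑ᶠ j ∈ Set.Ici (1 : ℕ),
        (sigmaZ (j : ℤ) - 4 * sigmaHalf (j : ℤ)) *
          sigmaZ (2 * (n : ℤ) + 1 - 2 * (j : ℤ)) :=
  sigma_recurrence_three_general n
end
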